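/- The antipode S of the quasi-shuffle Hopf algebra satisfies, for any word w = a₁a₂⋯aₙ: S(w) = Σ_{(i₁,…,i_l)∈C(n)} (-1)^l (a₁⋯a_{i₁}) * (a_{i₁+1}⋯a_{i₁+i₂}) * ⋯ * (a_{i₁+⋯+i_{l-1}+1}⋯aₙ). -/

import Mathlib

open Finsupp Classical

noncomputable section

variable {A : Type} 

/-- The word `w` as a basis element of the free module `k⟨A⟩`. -/
def sing (k : Type) [Field k] (w : List A) : List A →₀ k := Finsupp.single w 1

/-- Left multiplication of a linear combination of words by a letter. -/
def consF (k : Type) [Field k] (a : A) (f : List A →₀ k) : List A →₀ k :=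
  f.mapDomain (List.cons a)

/-- Left multiplication by an element of `A ∪ {0}` (with `none` playing the role of `0`). -/
def oconsF (k : Type) [Field k] : Option A → (List A →₀ k) → (List A →₀ k)
  | none, _ => 0
  | Option.some a, f => consF k a f

/-- The quasi-shuffle product of two words, with structure operation `br : A → A → Option A`
(`none` = 0):  `1*w = w*1 = w` and
`aw₁ * bw₂ = a(w₁*bw₂) + b(aw₁*w₂) + [a,b](w₁*w₂)`. -/
def qsh (k : Type) [Field k] (br : A → A → Option A) : List A → List A → (List A →₀ k)
  | [], w => sing k w
  | a :: u, [] => sing k (a :: u)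
  | a :: u, b :: v =>
      consF k a (qsh k br u (b :: v)) + consF k b (qsh k br (a :: u) v)
        + oconsF k (br a b) (qsh k br u v)
  termination_by w1 w2 => w1.length + w2.length

/-- Linear extension of a map defined on words. -/
def liftOne (k : Type) [Field k] {α β : Type} (f : α → (β →₀ k)) : (α →₀ k) → (β →₀ k) :=
  fun x => x.sum fun u c => c • f u

/-- Bilinear extension of a product defined on words. -/
def liftTwo (k : Type) [Field k] {α β : Type} (f : α → α → (β →₀ k)) :
    (α →₀ k) → (α →₀ k) → (β →₀ k) :=
  fun x y => x.sum fun u cu => y.sum fun v cv => (cu * cv) • f u v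

/-- The degree of a word: the sum of the degrees of its letters. -/
def degW (deg : A → ℕ) (w : List A) : ℕ := (w.map deg).sum

/-- The iterated bracket `[S]` of a nonempty sequence of letters (`none` = 0). -/
def brS (br : A → A → Option A) : List A → Option A
  | [] => none
  | [a] => some a
  | a :: b :: w => (brS br (b :: w)).bind (br a)

/-- The contraction `I[w]` of the word `w` along the composition with list of parts `I`:
consecutive blocks of `w` of lengths given by `I` are contracted via the iterated bracket;
the result is `0` if some bracket vanishes. -/
def contract (k : Type) [Field k] (br : A → A → Option A) : List ℕ → List A → (List A →₀ k)
  | [], w => (match w with | [] => sing k [] | _ => 0)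
  | i :: I, w => oconsF k (brS br (w.take i)) (contract k br I (w.drop i))

end

/-- Splitting of a word into consecutive blocks of lengths given by a composition. -/
def splitBlocks {A : Type} : List ℕ → List A → List (List A)
  | [], _ => []
  | i :: I, w => w.take i :: splitBlocks I (w.drop i)

/-- The quasi-shuffle product of a list of words (`1` for the empty list). -/
noncomputable def prodW (k : Type) [Field k] {A : Type} (br : A → A → Option A) :
    List (List A) → (List A →₀ k)
  | [] => sing k []
  | u :: l => liftTwo k (qsh k br) (sing k u) (prodW k br l)

/-! ### Auxiliary development -/

section AuxLift

variable {k α β : Type} [Field k] (f : α → α → (β →₀ k))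

lemma liftTwo_zero_left (y : α →₀ k) : liftTwo k f 0 y = 0 := by simp [liftTwo]

lemma liftTwo_zero_right (x : α →₀ k) : liftTwo k f x 0 = 0 := by simp [liftTwo]

lemma liftTwo_add_left (x x' y : α →₀ k) :
    liftTwo k f (x + x') y = liftTwo k f x y + liftTwo k f x' y := by
  unfold liftTwo
  apply Finsupp.sum_add_index' <;> intros <;> simp [add_mul, add_smul, Finsupp.sum_add]

lemma liftTwo_add_right (x y y' : α →₀ k) :
    liftTwo k f x (y + y') = liftTwo k f x y + liftTwo k f x y' := by
  unfold liftTwo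
  rw [← Finsupp.sum_add]
  apply Finsupp.sum_congr
  intro u _
  apply Finsupp.sum_add_index' <;> intros <;> simp [mul_add, add_smul]

lemma liftTwo_smul_left (c : k) (x y : α →₀ k) :
    liftTwo k f (c • x) y = c • liftTwo k f x y := by
  unfold liftTwo
  rw [Finsupp.sum_smul_index (fun u => by simp), Finsupp.smul_sum]
  apply Finsupp.sum_congr
  intro u _
  rw [Finsupp.smul_sum]
  apply Finsupp.sum_congr
  intro v _
  rw [smul_smul, mul_assoc]

lemma liftTwo_smul_right (c : k) (x y : α →₀ k) :
    liftTwo k f x (c • y) = c • liftTwo k f x y := by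
  unfold liftTwo
  rw [Finsupp.smul_sum]
  apply Finsupp.sum_congr
  intro u _
  rw [Finsupp.sum_smul_index (fun v => by simp), Finsupp.smul_sum]
  apply Finsupp.sum_congr
  intro v _
  rw [smul_smul, mul_left_comm]

lemma liftTwo_single_left (u : α) (c : k) (y : α →₀ k) :
    liftTwo k f (Finsupp.single u c) y = y.sum fun v d => (c * d) • f u v := by
  unfold liftTwo
  apply Finsupp.sum_single_index
  simp

lemma liftTwo_single_single (u v : α) (c d : k) :
    liftTwo k f (Finsupp.single u c) (Finsupp.single v d) = (c * d) • f u v := by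
  rw [liftTwo_single_left]
  apply Finsupp.sum_single_index
  simp

lemma liftTwo_sum_left {ι : Type*} (s : Finset ι) (g : ι → (α →₀ k)) (y : α →₀ k) :
    liftTwo k f (∑ j ∈ s, g j) y = ∑ j ∈ s, liftTwo k f (g j) y :=
  map_sum (AddMonoidHom.mk' (fun x => liftTwo k f x y) (fun a b => liftTwo_add_left f a b y)) g s

end AuxLift

section AuxQsh

variable {A k : Type} [Field k] (br : A → A → Option A)

lemma consF_zero (a : A) : consF k a (0 : List A →₀ k) = 0 := Finsupp.mapDomain_zero

lemma consF_add (a : A) (x y : List A →₀ k) :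
    consF k a (x + y) = consF k a x + consF k a y := Finsupp.mapDomain_add

lemma consF_smul (a : A) (c : k) (x : List A →₀ k) :
    consF k a (c • x) = c • consF k a x := Finsupp.mapDomain_smul c x

lemma consF_single (a : A) (u : List A) (c : k) :
    consF k a (Finsupp.single u c) = Finsupp.single (a :: u) c := Finsupp.mapDomain_single

lemma oconsF_zero (s : Option A) : oconsF k s (0 : List A →₀ k) = 0 := by
  cases s <;> simp [oconsF, consF_zero]

lemma oconsF_add (s : Option A) (x y : List A →₀ k) :
    oconsF k s (x + y) = oconsF k s x + oconsF k s y := by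
  cases s <;> simp [oconsF, consF_add]

lemma oconsF_smul (s : Option A) (c : k) (x : List A →₀ k) :
    oconsF k s (c • x) = c • oconsF k s x := by
  cases s <;> simp [oconsF, consF_smul]

lemma sing_cons (a : A) (u : List A) : sing k (a :: u) = consF k a (sing k u) := by
  simp [sing, consF, Finsupp.mapDomain_single]

lemma qsh_nil_left (w : List A) : qsh k br [] w = sing k w := by rw [qsh]

lemma qsh_nil_right (u : List A) : qsh k br u [] = sing k u := by cases u <;> rw [qsh]

lemma qsh_cons (a : A) (u : List A) (b : A) (v : List A) :
    qsh k br (a::u) (b::v)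
      = consF k a (qsh k br u (b::v)) + consF k b (qsh k br (a::u) v)
        + oconsF k (br a b) (qsh k br u v) := by rw [qsh]

lemma M_cons_cons (a b : A) (x y : List A →₀ k) :
    liftTwo k (qsh k br) (consF k a x) (consF k b y)
      = consF k a (liftTwo k (qsh k br) x (consF k b y))
        + consF k b (liftTwo k (qsh k br) (consF k a x) y)
        + oconsF k (br a b) (liftTwo k (qsh k br) x y) := by
  induction x using Finsupp.induction_linear with
  | zero => simp [consF_zero, liftTwo_zero_left, oconsF_zero]
  | add x x' hx hx' =>
      simp only [consF_add, liftTwo_add_left, oconsF_add, hx, hx']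
      abel
  | single u c =>
      induction y using Finsupp.induction_linear with
      | zero => simp [consF_zero, liftTwo_zero_right, oconsF_zero]
      | add y y' hy hy' =>
          simp only [consF_add, liftTwo_add_right, oconsF_add, hy, hy']
          abel
      | single v d =>
          simp only [consF_single, liftTwo_single_single, qsh_cons, smul_add,
            consF_smul, oconsF_smul]

lemma R1 (a b : A) (v : List A) (x : List A →₀ k) :
    liftTwo k (qsh k br) (consF k a x) (sing k (b::v))
      = consF k a (liftTwo k (qsh k br) x (sing k (b::v)))
        + consF k b (liftTwo k (qsh k br) (consF k a x) (sing k v))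
        + oconsF k (br a b) (liftTwo k (qsh k br) x (sing k v)) := by
  rw [sing_cons b v]
  exact M_cons_cons br a b x (sing k v)

lemma R2 (s : Option A) (b : A) (v : List A) (x : List A →₀ k) :
    liftTwo k (qsh k br) (oconsF k s x) (sing k (b::v))
      = oconsF k s (liftTwo k (qsh k br) x (sing k (b::v)))
        + consF k b (liftTwo k (qsh k br) (oconsF k s x) (sing k v))
        + oconsF k (s.bind (fun e => br e b)) (liftTwo k (qsh k br) x (sing k v)) := by
  cases s with
  | none => simp [oconsF, liftTwo_zero_left, consF_zero, Option.bind]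
  | some e => simpa [oconsF, Option.bind] using R1 br e b v x

lemma R3 (a b : A) (u : List A) (y : List A →₀ k) :
    liftTwo k (qsh k br) (sing k (a::u)) (consF k b y)
      = consF k a (liftTwo k (qsh k br) (sing k u) (consF k b y))
        + consF k b (liftTwo k (qsh k br) (sing k (a::u)) y)
        + oconsF k (br a b) (liftTwo k (qsh k br) (sing k u) y) := by
  rw [sing_cons a u]
  exact M_cons_cons br a b (sing k u) y

lemma R4 (a : A) (t : Option A) (u : List A) (y : List A →₀ k) :
    liftTwo k (qsh k br) (sing k (a::u)) (oconsF k t y)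
      = consF k a (liftTwo k (qsh k br) (sing k u) (oconsF k t y))
        + oconsF k t (liftTwo k (qsh k br) (sing k (a::u)) y)
        + oconsF k (t.bind (br a)) (liftTwo k (qsh k br) (sing k u) y) := by
  cases t with
  | none => simp [oconsF, liftTwo_zero_right, consF_zero, Option.bind]
  | some e => simpa [oconsF, Option.bind] using R3 br a e u y

end AuxQsh

section AuxAssoc

variable {A k : Type} [Field k] (br : A → A → Option A)

lemma M_sing_sing (u v : List A) :
    liftTwo k (qsh k br) (sing k u) (sing k v) = qsh k br u v := by
  simp [sing, liftTwo_single_single]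

lemma M_sing_nil_left (x : List A →₀ k) :
    liftTwo k (qsh k br) (sing k []) x = x := by
  rw [sing, liftTwo_single_left]
  conv_rhs => rw [← Finsupp.sum_single x]
  apply Finsupp.sum_congr
  intro v _
  rw [one_mul, qsh_nil_left, sing, Finsupp.smul_single, smul_eq_mul, mul_one]

lemma M_sing_nil_right (x : List A →₀ k) :
    liftTwo k (qsh k br) x (sing k []) = x := by
  unfold liftTwo
  conv_rhs => rw [← Finsupp.sum_single x]
  apply Finsupp.sum_congr
  intro u _
  rw [sing, Finsupp.sum_single_index (by simp), mul_one, qsh_nil_right, sing,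
    Finsupp.smul_single, smul_eq_mul, mul_one]

lemma L1 (a b c : A) (u v w : List A) :
    liftTwo k (qsh k br) (qsh k br (a::u) (b::v)) (sing k (c::w))
      = consF k a (liftTwo k (qsh k br) (qsh k br u (b::v)) (sing k (c::w)))
        + consF k b (liftTwo k (qsh k br) (qsh k br (a::u) v) (sing k (c::w)))
        + oconsF k (br a b) (liftTwo k (qsh k br) (qsh k br u v) (sing k (c::w)))
        + consF k c (liftTwo k (qsh k br) (qsh k br (a::u) (b::v)) (sing k w))
        + oconsF k (br a c) (liftTwo k (qsh k br) (qsh k br u (b::v)) (sing k w))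
        + oconsF k (br b c) (liftTwo k (qsh k br) (qsh k br (a::u) v) (sing k w))
        + oconsF k ((br a b).bind (fun e => br e c))
            (liftTwo k (qsh k br) (qsh k br u v) (sing k w)) := by
  conv_lhs => rw [qsh_cons]
  conv_rhs => rw [qsh_cons br a u b v]
  simp only [liftTwo_add_left, R1, R2, consF_add]
  abel

lemma L2 (a b c : A) (u v w : List A) :
    liftTwo k (qsh k br) (sing k (a::u)) (qsh k br (b::v) (c::w))
      = consF k a (liftTwo k (qsh k br) (sing k u) (qsh k br (b::v) (c::w)))
        + consF k b (liftTwo k (qsh k br) (sing k (a::u)) (qsh k br v (c::w)))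
        + oconsF k (br a b) (liftTwo k (qsh k br) (sing k u) (qsh k br v (c::w)))
        + consF k c (liftTwo k (qsh k br) (sing k (a::u)) (qsh k br (b::v) w))
        + oconsF k (br a c) (liftTwo k (qsh k br) (sing k u) (qsh k br (b::v) w))
        + oconsF k (br b c) (liftTwo k (qsh k br) (sing k (a::u)) (qsh k br v w))
        + oconsF k ((br b c).bind (br a))
            (liftTwo k (qsh k br) (sing k u) (qsh k br v w)) := by
  conv_lhs => rw [qsh_cons]
  conv_rhs => rw [qsh_cons br b v c w]
  simp only [liftTwo_add_right, R3, R4, consF_add]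
  abel

lemma qsh_assoc (hassoc : ∀ a b c, (br a b).bind (fun x => br x c) = (br b c).bind (br a)) :
    ∀ n : ℕ, ∀ u v w : List A, u.length + v.length + w.length ≤ n →
    liftTwo k (qsh k br) (qsh k br u v) (sing k w)
      = liftTwo k (qsh k br) (sing k u) (qsh k br v w) := by
  intro n
  induction n with
  | zero =>
      intro u v w h
      have hu : u = [] := by cases u <;> simp_all
      have hv : v = [] := by cases v <;> simp_all
      have hw : w = [] := by cases w <;> simp_all
      subst hu; subst hv; subst hw
      simp [qsh_nil_left, M_sing_nil_left, M_sing_nil_right]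
  | succ n ih =>
      intro u v w h
      match u, v, w with
      | [], v, w =>
          rw [qsh_nil_left, M_sing_nil_left, M_sing_sing]
      | a::u, [], w =>
          rw [qsh_nil_right, qsh_nil_left]
      | a::u, b::v, [] =>
          rw [qsh_nil_right, M_sing_nil_right, M_sing_sing]
      | a::u, b::v, c::w =>
          have hlen : u.length + v.length + w.length + 2 ≤ n := by
            simp only [List.length_cons] at h; omega
          rw [L1, L2,
            ih u (b::v) (c::w) (by first | (simp only [List.length_cons]; omega) | omega),
            ih (a::u) v (c::w) (by first | (simp only [List.length_cons]; omega) | omega),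
            ih u v (c::w) (by first | (simp only [List.length_cons]; omega) | omega),
            ih (a::u) (b::v) w (by first | (simp only [List.length_cons]; omega) | omega),
            ih u (b::v) w (by first | (simp only [List.length_cons]; omega) | omega),
            ih (a::u) v w (by first | (simp only [List.length_cons]; omega) | omega),
            ih u v w (by first | (simp only [List.length_cons]; omega) | omega),
            hassoc a b c]

lemma M_assoc3 (hassoc : ∀ a b c, (br a b).bind (fun x => br x c) = (br b c).bind (br a))
    (u v : List A) (y : List A →₀ k) :
    liftTwo k (qsh k br) (liftTwo k (qsh k br) (sing k u) y) (sing k v)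
      = liftTwo k (qsh k br) (sing k u) (liftTwo k (qsh k br) y (sing k v)) := by
  induction y using Finsupp.induction_linear with
  | zero => simp [liftTwo_zero_left, liftTwo_zero_right]
  | add y y' hy hy' => simp only [liftTwo_add_left, liftTwo_add_right, hy, hy']
  | single t c =>
      rw [show Finsupp.single t c = c • sing k t by simp [sing]]
      rw [liftTwo_smul_right, liftTwo_smul_left, liftTwo_smul_left, liftTwo_smul_right]
      congr 1
      rw [show liftTwo k (qsh k br) (sing k u) (sing k t) = qsh k br u t by
            simp [sing, liftTwo_single_single],
          show liftTwo k (qsh k br) (sing k t) (sing k v) = qsh k br t v by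
            simp [sing, liftTwo_single_single]]
      exact qsh_assoc br hassoc (u.length + t.length + v.length) u t v le_rfl

end AuxAssoc

section AuxMain

variable {A k : Type} [Field k] (br : A → A → Option A)

lemma prodW_nil : prodW k br ([] : List (List A)) = sing k [] := by simp [prodW]

lemma prodW_cons (u : List A) (l : List (List A)) :
    prodW k br (u :: l) = liftTwo k (qsh k br) (sing k u) (prodW k br l) := by simp [prodW]

lemma prodW_concat
    (hassoc : ∀ a b c, (br a b).bind (fun x => br x c) = (br b c).bind (br a))
    (l : List (List A)) (v : List A) :
    prodW k br (l ++ [v]) = liftTwo k (qsh k br) (prodW k br l) (sing k v) := by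
  induction l with
  | nil =>
      rw [List.nil_append, prodW_nil, M_sing_nil_left, prodW_cons, prodW_nil,
        M_sing_sing, qsh_nil_right]
  | cons u l ih =>
      rw [List.cons_append, prodW_cons, ih, ← M_assoc3 br hassoc, ← prodW_cons]

lemma splitBlocks_append (B₁ B₂ : List ℕ) (w : List A) :
    splitBlocks (B₁ ++ B₂) w
      = splitBlocks B₁ (w.take B₁.sum) ++ splitBlocks B₂ (w.drop B₁.sum) := by
  induction B₁ generalizing w with
  | nil => simp [splitBlocks]
  | cons i B ih =>
      show w.take i :: splitBlocks (B ++ B₂) (w.drop i) = _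
      rw [ih]
      simp only [List.sum_cons, splitBlocks, List.cons_append]
      rw [List.take_take, min_eq_left (Nat.le_add_right i B.sum),
        List.drop_take, Nat.add_sub_cancel_left, List.drop_drop, Nat.add_comm]

def compFinset (n : ℕ) : Finset (List ℕ) :=
  Finset.univ.image (fun I : Composition n => I.blocks)

lemma mem_compFinset {n : ℕ} {B : List ℕ} :
    B ∈ compFinset n ↔ (∀ j ∈ B, 0 < j) ∧ B.sum = n := by
  constructor
  · intro h
    simp only [compFinset, Finset.mem_image, Finset.mem_univ, true_and] at h
    obtain ⟨I, rfl⟩ := h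
    exact ⟨fun j hj => I.blocks_pos hj, I.blocks_sum⟩
  · rintro ⟨h1, h2⟩
    simp only [compFinset, Finset.mem_image, Finset.mem_univ, true_and]
    exact ⟨⟨B, fun {j} hj => h1 j hj, h2⟩, rfl⟩

lemma sum_compFinset {M : Type} [AddCommMonoid M] (n : ℕ) (g : List ℕ → M) :
    ∑ B ∈ compFinset n, g B = ∑ I : Composition n, g I.blocks := by
  apply Finset.sum_image
  intro x _ y _ h
  ext1
  exact h

lemma compFinset_zero : compFinset 0 = {[]} := by
  ext B
  simp only [mem_compFinset, Finset.mem_singleton]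
  constructor
  · rintro ⟨h1, h2⟩
    cases B with
    | nil => rfl
    | cons j t =>
        exfalso
        have := h1 j (by simp)
        simp only [List.sum_cons] at h2
        omega
  · rintro rfl
    simp

lemma compFinset_succ_sum {M : Type} [AddCommMonoid M] {n : ℕ} (hn : 0 < n)
    (f : List ℕ → M) :
    ∑ B ∈ compFinset n, f B
      = ∑ i ∈ Finset.range n, ∑ B ∈ compFinset i, f (B ++ [n - i]) := by
  rw [Finset.sum_sigma' (Finset.range n) (fun i => compFinset i)
    (fun i B => f (B ++ [n - i]))]
  have hlast : ∀ B ∈ compFinset n, B ≠ [] := by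
    intro B hB hBnil
    obtain ⟨-, h2⟩ := mem_compFinset.mp hB
    rw [hBnil] at h2
    simp at h2
    omega
  have hsum : ∀ (B : List ℕ) (h : B ≠ []), B.dropLast.sum + B.getLast h = B.sum := by
    intro B h
    conv_rhs => rw [← List.dropLast_append_getLast h]
    rw [List.sum_append, List.sum_cons, List.sum_nil, Nat.add_zero]
  symm
  refine Finset.sum_nbij' (fun p => p.2 ++ [n - p.1])
    (fun B => (⟨B.dropLast.sum, B.dropLast⟩ : Σ _ : ℕ, List ℕ)) ?_ ?_ ?_ ?_ ?_
  · rintro ⟨i, B⟩ hp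
    rw [Finset.mem_sigma] at hp
    dsimp only at hp
    obtain ⟨hi, hB⟩ := hp
    rw [Finset.mem_range] at hi
    obtain ⟨h1, h2⟩ := mem_compFinset.mp hB
    dsimp only
    rw [mem_compFinset]
    constructor
    · intro j hj
      rcases List.mem_append.mp hj with hj | hj
      · exact h1 j hj
      · simp only [List.mem_singleton] at hj
        omega
    · rw [List.sum_append, h2]
      simp only [List.sum_cons, List.sum_nil]
      omega
  · intro B hB
    have hBne := hlast B hB
    obtain ⟨h1, h2⟩ := mem_compFinset.mp hB
    rw [Finset.mem_sigma, Finset.mem_range, mem_compFinset]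
    dsimp only
    have hglast : 0 < B.getLast hBne := h1 _ (List.getLast_mem hBne)
    have := hsum B hBne
    refine ⟨by omega, fun j hj => h1 j (List.dropLast_subset B hj), rfl⟩
  · rintro ⟨i, B⟩ hp
    rw [Finset.mem_sigma] at hp
    dsimp only at hp
    obtain ⟨hi, hB⟩ := hp
    obtain ⟨-, h2⟩ := mem_compFinset.mp hB
    dsimp only
    rw [List.dropLast_concat, h2]
  · intro B hB
    have hBne := hlast B hB
    obtain ⟨-, h2⟩ := mem_compFinset.mp hB
    have := hsum B hBne
    dsimp only
    rw [show n - B.dropLast.sum = B.getLast hBne by omega,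
      List.dropLast_append_getLast hBne]
  · rintro ⟨i, B⟩ hp
    rfl

end AuxMain

/-- The antipode `S` of the quasi-shuffle Hopf algebra, determined
recursively by `S(1) = 1` and `S(w) = -Σ_{k=0}^{n-1} S(a₁⋯a_k) * a_{k+1}⋯aₙ`, satisfies
`S(w) = Σ_{(i₁,…,i_l)∈C(n)} (-1)^l (a₁⋯a_{i₁}) * (a_{i₁+1}⋯a_{i₁+i₂}) * ⋯`. -/
theorem antipode_first_formula {A k : Type} [Field k] [CharZero k]
    (deg : A → ℕ) (hpos : ∀ a, 0 < deg a)
    (br : A → A → Option A)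
    (hcomm : ∀ a b, br a b = br b a)
    (hassoc : ∀ a b c, (br a b).bind (fun x => br x c) = (br b c).bind (br a))
    (hdeg : ∀ a b c, br a b = some c → deg c = deg a + deg b)
    (S : List A → (List A →₀ k))
    (hS1 : S [] = sing k [])
    (hSrec : ∀ w : List A, w ≠ [] →
      S w = - ∑ i ∈ Finset.range w.length,
        liftTwo k (qsh k br) (S (w.take i)) (sing k (w.drop i))) :
    ∀ w : List A,
      S w = ∑ I : Composition w.length,
        ((-1 : k) ^ I.length) • prodW k br (splitBlocks I.blocks w) := by
  have key : ∀ n : ℕ, ∀ w : List A, w.length = n →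
      S w = ∑ B ∈ compFinset n, ((-1 : k) ^ B.length) • prodW k br (splitBlocks B w) := by
    intro n
    induction n using Nat.strong_induction_on with
    | _ n ih =>
      intro w hw
      rcases eq_or_ne w [] with rfl | hne
      · simp only [List.length_nil] at hw
        subst hw
        rw [hS1, compFinset_zero, Finset.sum_singleton]
        simp [splitBlocks, prodW]
      · have hn : 0 < n := hw ▸ List.length_pos_iff.mpr hne
        rw [hSrec w hne, hw, compFinset_succ_sum hn, ← Finset.sum_neg_distrib]
        apply Finset.sum_congr rfl
        intro i hi
        rw [Finset.mem_range] at hi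
        have hlen : (w.take i).length = i := by rw [List.length_take]; omega
        rw [ih i hi (w.take i) hlen, liftTwo_sum_left, ← Finset.sum_neg_distrib]
        apply Finset.sum_congr rfl
        intro B hB
        obtain ⟨hBpos, hBsum⟩ := mem_compFinset.mp hB
        rw [liftTwo_smul_left, ← prodW_concat br hassoc, ← neg_smul]
        congr 1
        · rw [List.length_append, List.length_singleton, pow_succ, mul_neg_one]
        · have hdl : List.take (n - i) (List.drop i w) = List.drop i w :=
            List.take_of_length_le (by rw [List.length_drop]; omega)
          rw [splitBlocks_append, hBsum]
          simp only [splitBlocks, hdl]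
  intro w
  rw [key w.length w rfl, sum_compFinset]
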